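/- For every binary quartic f and all λ, μ ∈ K: c4(λf + μH(f)) = c4(f)·λ² + 2c6(f)·λμ + c4(f)²·μ²; c6(λf + μH(f)) = c6(f)·λ³ + 3c4(f)²·λ²μ + 3c4(f)c6(f)·λμ² + (2c6(f)² − c4(f)³)·μ³; and H(λf + μH(f)) = (2c4(f)λμ + 2c6(f)μ²)·f + (λ² − c4(f)μ²)·H(f). Consequently Δ(λf + μH(f)) = Δ(f)·(λ³ − 3c4(f)λμ² − 2c6(f)μ³)², where Δ = (c4³ − c6²)/1728. -/
import Mathlib


noncomputable section

/-- The invariant `c4` of the binary quartic with coefficients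
`v 0·x⁴ + v 1·x³z + v 2·x²z² + v 3·xz³ + v 4·z⁴`. -/
def c4q {K : Type*} [Field K] (v : Fin 5 → K) : K :=
  2 ^ 4 * (12 * v 0 * v 4 - 3 * v 1 * v 3 + (v 2) ^ 2)

/-- The invariant `c6` of a binary quartic. -/
def c6q {K : Type*} [Field K] (v : Fin 5 → K) : K :=
  2 ^ 5 * (72 * v 0 * v 2 * v 4 - 27 * v 0 * (v 3) ^ 2 - 27 * (v 1) ^ 2 * v 4 +
    9 * v 1 * v 2 * v 3 - 2 * (v 2) ^ 3)

/-- The discriminant of a binary quartic. -/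
def Δq {K : Type*} [Field K] (v : Fin 5 → K) : K :=
  (c4q v ^ 3 - c6q v ^ 2) / 1728

/-- The Hessian of a binary quartic (in coefficients). -/
def Hq {K : Type*} [Field K] (v : Fin 5 → K) : Fin 5 → K :=
  ![8 * v 0 * v 2 - 3 * (v 1) ^ 2,
    24 * v 0 * v 3 - 4 * v 1 * v 2,
    48 * v 0 * v 4 + 6 * v 1 * v 3 - 4 * (v 2) ^ 2,
    24 * v 1 * v 4 - 4 * v 2 * v 3,
    8 * v 2 * v 4 - 3 * (v 3) ^ 2]

/-- The Hesse polynomial identities for binary quartics (the case `n = 2` of the paper's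
Theorem 8.5): the invariants and the Hessian of `λf + μH(f)`, and the resulting formula
for the discriminant. -/
theorem hesse_identities_binary_quartic (K : Type*) [Field K]
    (h2 : (2 : K) ≠ 0) (h3 : (3 : K) ≠ 0)
    (v : Fin 5 → K) (l m : K) :
    c4q (l • v + m • Hq v) =
      c4q v * l ^ 2 + 2 * c6q v * l * m + (c4q v) ^ 2 * m ^ 2 ∧
    c6q (l • v + m • Hq v) =
      c6q v * l ^ 3 + 3 * (c4q v) ^ 2 * l ^ 2 * m + 3 * c4q v * c6q v * l * m ^ 2 +
        (2 * (c6q v) ^ 2 - (c4q v) ^ 3) * m ^ 3 ∧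
    Hq (l • v + m • Hq v) =
      (2 * c4q v * l * m + 2 * c6q v * m ^ 2) • v + (l ^ 2 - c4q v * m ^ 2) • Hq v ∧
    Δq (l • v + m • Hq v) =
      Δq v * (l ^ 3 - 3 * c4q v * l * m ^ 2 - 2 * c6q v * m ^ 3) ^ 2 := by
  have hc4 : c4q (l • v + m • Hq v) =
      c4q v * l ^ 2 + 2 * c6q v * l * m + (c4q v) ^ 2 * m ^ 2 := by
    simp only [c4q, c6q, Hq, Pi.add_apply, Pi.smul_apply, smul_eq_mul,
      Matrix.cons_val_zero, Matrix.cons_val_one, Matrix.head_cons, Matrix.cons_val_two,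
      Matrix.tail_cons, Matrix.cons_val_three, Matrix.cons_val_four]
    ring
  have hc6 : c6q (l • v + m • Hq v) =
      c6q v * l ^ 3 + 3 * (c4q v) ^ 2 * l ^ 2 * m + 3 * c4q v * c6q v * l * m ^ 2 +
        (2 * (c6q v) ^ 2 - (c4q v) ^ 3) * m ^ 3 := by
    simp only [c4q, c6q, Hq, Pi.add_apply, Pi.smul_apply, smul_eq_mul,
      Matrix.cons_val_zero, Matrix.cons_val_one, Matrix.head_cons, Matrix.cons_val_two,
      Matrix.tail_cons, Matrix.cons_val_three, Matrix.cons_val_four]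
    ring
  have key : ∀ i : Fin 5, Hq (l • v + m • Hq v) i =
      ((2 * c4q v * l * m + 2 * c6q v * m ^ 2) • v + (l ^ 2 - c4q v * m ^ 2) • Hq v) i := by
    intro i
    match i with
    | 0 | 1 | 2 | 3 | 4 =>
      simp only [c4q, c6q, Hq, Pi.add_apply, Pi.smul_apply, smul_eq_mul,
        Matrix.cons_val_zero, Matrix.cons_val_one, Matrix.head_cons, Matrix.cons_val_two,
        Matrix.tail_cons, Matrix.cons_val_three, Matrix.cons_val_four]
      ring
  refine ⟨hc4, hc6, funext key, ?_⟩
  · have h1728 : (1728 : K) ≠ 0 := by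
      have : (1728 : K) = 2 ^ 6 * 3 ^ 3 := by norm_num
      rw [this]
      exact mul_ne_zero (pow_ne_zero _ h2) (pow_ne_zero _ h3)
    simp only [Δq, hc4, hc6]
    rw [div_mul_eq_mul_div, div_eq_div_iff h1728 h1728]
    ring
end
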